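/- Complete graphs are generators: for every n ≥ 3, the complete graph K_V on a finite set V with |V| = n (the graph whose edges are all unordered pairs of distinct elements of V) does not belong to the support of any insertion g₁ ∘_* g₂, where g₁ is a simple graph on a finite set V₁ with * ∈ V₁ and |V₁| ≥ 2, g₂ is a simple graph on a finite set V₂ disjoint from V₁ with |V₂| ≥ 2, and (V₁ \ {*}) ∪ V₂ = V. (This exhibits an infinite family of graphs that must be generators of the graph insertion operad, supporting the proposition that this operad has infinitely many generators.) -/

import Mathlib

/-!
Common framework: a simple graph on a finite vertex set `V ⊆ α` is a finite set of
unordered pairs (`Sym2 α`) of distinct elements of `V`.  The insertion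
`g₁ ∘_star g₂` is an element of the free `ℚ`-module `Finset (Sym2 α) →₀ ℚ`
on the set of edge sets.
-/

open scoped Classical

variable {α : Type*} [DecidableEq α]

/-- The finite edge set `g` is a simple graph on the vertex set `V`. -/
def IsGraphOn (V : Finset α) (g : Finset (Sym2 α)) : Prop :=
  ∀ e ∈ g, ¬ e.IsDiag ∧ ∀ v ∈ e, v ∈ V

/-- The two endpoints of an unordered pair, as a `Finset`. -/
def sym2Finset : Sym2 α → Finset α :=
  Sym2.lift ⟨fun a b => {a, b}, by intro a b; simp [Finset.pair_comm]⟩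

/-- Neighbours of `x` in the edge set `g`. -/
def nbrs (g : Finset (Sym2 α)) (x : α) : Finset α :=
  (g.biUnion sym2Finset).filter fun v => s(x, v) ∈ g

/-- Remove the vertex `x` (and all incident edges) from the edge set `g`. -/
def delG (g : Finset (Sym2 α)) (x : α) : Finset (Sym2 α) :=
  g.filter fun e => x ∉ e

/-- The edges `{v, f v}` obtained from a reconnection map `f : C → V₂`. -/
def newEdges (C V₂ : Finset α) (f : {v // v ∈ C} → {w // w ∈ V₂}) : Finset (Sym2 α) :=
  Finset.univ.image fun v : {v // v ∈ C} => s(v.1, (f v).1)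

/-- Insertion `g₁ ∘_star g₂` of a graph `g₂` on the vertex set `V₂` into a graph `g₁`:
the sum, over all maps `f` from the neighbours of `star` in `g₁` to `V₂`, of the graph
obtained by deleting `star` from `g₁`, adding `g₂`, and reconnecting along `f`. -/
noncomputable def ins (V₂ : Finset α) (star : α) (g₁ g₂ : Finset (Sym2 α)) :
    Finset (Sym2 α) →₀ ℚ :=
  ∑ f : ({v // v ∈ nbrs g₁ star} → {w // w ∈ V₂}),
    Finsupp.single (delG g₁ star ∪ g₂ ∪ newEdges (nbrs g₁ star) V₂ f) 1

/-- Bilinear extension of the insertion to the free module on graphs. -/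
noncomputable def insM (V₂ : Finset α) (star : α) (x y : Finset (Sym2 α) →₀ ℚ) :
    Finset (Sym2 α) →₀ ℚ :=
  x.sum fun g₁ c₁ => y.sum fun g₂ c₂ => (c₁ * c₂) • ins V₂ star g₁ g₂

/-- The complete graph on `V`: all unordered pairs of distinct elements of `V`. -/
def completeG (V : Finset α) : Finset (Sym2 α) :=
  ((V ×ˢ V).filter fun p => p.1 ≠ p.2).image fun p => s(p.1, p.2)

/-!
In a graph `(g₁ \ star) ∪ g₂ ∪ {{v, f v}}` of the support of `g₁ ∘_star g₂`, the only edges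
between `V₁` and `V₂` are the reconnection edges, so a vertex `v ≠ star` of `V₁` is joined to
at most one vertex of `V₂`, namely `f v`. In the complete graph on `V₁.erase star ∪ V₂` it is
joined to all of `V₂`, which has at least two elements.
-/

lemma exists_eq_of_mem_support_ins {V₂ : Finset α} {star : α} {g₁ g₂ g : Finset (Sym2 α)}
    (hg : g ∈ (ins V₂ star g₁ g₂).support) :
    ∃ f, g = delG g₁ star ∪ g₂ ∪ newEdges (nbrs g₁ star) V₂ f := by
  obtain ⟨f, -, hf⟩ := Finset.mem_biUnion.mp (Finsupp.support_finsetSum hg)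
  exact ⟨f, by simpa using Finsupp.support_single_subset hf⟩

lemma exists_eq_of_mem_newEdges {C V₂ : Finset α} {f : {v // v ∈ C} → {w // w ∈ V₂}}
    {v w : α} (hv : v ∉ V₂) (h : s(v, w) ∈ newEdges C V₂ f) :
    ∃ hvC : v ∈ C, w = f ⟨v, hvC⟩ := by
  obtain ⟨u, -, hu⟩ := Finset.mem_image.mp h
  rcases Sym2.eq_iff.mp hu with ⟨rfl, rfl⟩ | ⟨-, hfu⟩
  · exact ⟨u.2, rfl⟩
  · exact absurd (hfu ▸ (f u).2) hv

lemma exists_eq_of_cross_edge_mem {V₁ V₂ : Finset α} {star : α} {g₁ g₂ : Finset (Sym2 α)}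
    (hg₁ : IsGraphOn V₁ g₁) (hg₂ : IsGraphOn V₂ g₂)
    {f : {v // v ∈ nbrs g₁ star} → {w // w ∈ V₂}} {v w : α} (hv : v ∉ V₂) (hw : w ∉ V₁)
    (h : s(v, w) ∈ delG g₁ star ∪ g₂ ∪ newEdges (nbrs g₁ star) V₂ f) :
    ∃ hvC : v ∈ nbrs g₁ star, w = f ⟨v, hvC⟩ := by
  rcases Finset.mem_union.mp h with h | h
  · rcases Finset.mem_union.mp h with h | h
    · exact absurd ((hg₁ _ (Finset.mem_filter.mp h).1).2 w (Sym2.mem_mk_right v w)) hw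
    · exact absurd ((hg₂ _ h).2 v (Sym2.mem_mk_left v w)) hv
  · exact exists_eq_of_mem_newEdges hv h

lemma mk_mem_completeG {V : Finset α} {v w : α} (hv : v ∈ V) (hw : w ∈ V) (hvw : v ≠ w) :
    s(v, w) ∈ completeG V :=
  Finset.mem_image.mpr ⟨(v, w), Finset.mem_filter.mpr ⟨Finset.mem_product.mpr ⟨hv, hw⟩, hvw⟩, rfl⟩

theorem complete_graph_not_in_insertion_support_general
    (V : Finset α) :
    ∀ (V₁ V₂ : Finset α) (star : α), Disjoint V₁ V₂ → star ∈ V₁ →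
      2 ≤ V₁.card → 2 ≤ V₂.card → V₁.erase star ∪ V₂ = V →
      ∀ g₁ g₂ : Finset (Sym2 α), IsGraphOn V₁ g₁ → IsGraphOn V₂ g₂ →
        completeG V ∉ (ins V₂ star g₁ g₂).support := by
  intro V₁ V₂ star hdisj hstar hV₁ hV₂ hunion g₁ g₂ hg₁ hg₂ hmem
  obtain ⟨f, hf⟩ := exists_eq_of_mem_support_ins hmem
  obtain ⟨v, hv⟩ : (V₁.erase star).Nonempty := by
    rw [← Finset.card_pos, Finset.card_erase_of_mem hstar]
    omega
  obtain ⟨w₁, hw₁, w₂, hw₂, hw₁₂⟩ := Finset.one_lt_card.mp (by omega : 1 < V₂.card)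
  have hvV₂ : v ∉ V₂ := Finset.disjoint_left.mp hdisj (Finset.mem_of_mem_erase hv)
  have reconnected_to : ∀ w ∈ V₂, ∃ hvC : v ∈ nbrs g₁ star, w = f ⟨v, hvC⟩ := by
    intro w hw
    have hedge : s(v, w) ∈ completeG V :=
      mk_mem_completeG (hunion ▸ Finset.mem_union_left _ hv)
        (hunion ▸ Finset.mem_union_right _ hw) (ne_of_mem_of_not_mem hw hvV₂).symm
    exact exists_eq_of_cross_edge_mem hg₁ hg₂ hvV₂ (Finset.disjoint_right.mp hdisj hw)
      (hf ▸ hedge)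
  obtain ⟨_, hfw₁⟩ := reconnected_to w₁ hw₁
  obtain ⟨_, hfw₂⟩ := reconnected_to w₂ hw₂
  exact hw₁₂ (hfw₁.trans hfw₂.symm)

/-- **Complete graphs are generators**: for `n ≥ 3`, the complete graph on a set `V` of
cardinality `n` does not belong to the support of any insertion `g₁ ∘_star g₂` with vertex
sets of cardinality at least `2` recomposing `V`. -/
theorem complete_graph_not_in_insertion_support
    (n : ℕ) (hn : 3 ≤ n) (V : Finset α) (hV : V.card = n) :
    ∀ (V₁ V₂ : Finset α) (star : α), Disjoint V₁ V₂ → star ∈ V₁ →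
      2 ≤ V₁.card → 2 ≤ V₂.card → V₁.erase star ∪ V₂ = V →
      ∀ g₁ g₂ : Finset (Sym2 α), IsGraphOn V₁ g₁ → IsGraphOn V₂ g₂ →
        completeG V ∉ (ins V₂ star g₁ g₂).support :=
  complete_graph_not_in_insertion_support_general V
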